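/- For all natural numbers r ≥ 1 and 0 ≤ j ≤ r, the polynomial ρ_j φ_{r−j} ζ_{r−j} lies in the ideal J_r of ℂ[α,β,γ]. -/
import Mathlib


open MvPolynomial

/-- ζ_k ∈ ℂ[α,β,γ] (variables: X 0 = α, X 1 = β, X 2 = γ). -/
noncomputable def zeta : ℕ → MvPolynomial (Fin 3) ℂ
  | 0 => 1
  | 1 => X 0
  | 2 => X 0 * zeta 1 + (X 1 - C 8) * zeta 0
  | (n + 3) =>
      X 0 * zeta (n + 2)
        + C (((n : ℂ) + 2) ^ 2) * (X 1 + C ((-1) ^ (n + 2) * 8)) * zeta (n + 1)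
        + C (2 * ((n : ℂ) + 2) * ((n : ℂ) + 1)) * X 2 * zeta n

/-- J_g = (ζ_g, ζ_{g+1}, ζ_{g+2}) ⊆ ℂ[α,β,γ]. -/
noncomputable def J (g : ℕ) : Ideal (MvPolynomial (Fin 3) ℂ) :=
  Ideal.span {zeta g, zeta (g + 1), zeta (g + 2)}

/-- β₋ = β − 8. -/
noncomputable def betaM : MvPolynomial (Fin 3) ℂ := X 1 - C 8

/-- β₊ = β + 8. -/
noncomputable def betaP : MvPolynomial (Fin 3) ℂ := X 1 + C 8

/-- φ_r = β₋^{⌊r/2⌋+1} β₊^{⌈r/2⌉}. -/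
noncomputable def phi (r : ℕ) : MvPolynomial (Fin 3) ℂ :=
  betaM ^ (r / 2 + 1) * betaP ^ ((r + 1) / 2)

/-- ρ_j = β₋^{2⌊(j−1)/2⌋} β₊^{j−1} for j ≥ 1, and ρ_j = 1 for j < 1. -/
noncomputable def rho : ℕ → MvPolynomial (Fin 3) ℂ
  | 0 => 1
  | (m + 1) => betaM ^ (2 * (m / 2)) * betaP ^ m

/-! ### Auxiliary machinery -/

namespace RhoPhiAux

abbrev P3 := MvPolynomial (Fin 3) ℂ

/-- monomials in β₋, β₊ -/
noncomputable def mono (p q : ℕ) : P3 := betaM ^ p * betaP ^ q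

lemma mono_mul (p q u v : ℕ) : mono p q * mono u v = mono (p+u) (q+v) := by
  rw [mono, mono, mono, pow_add, pow_add]; ring

lemma mono_congr {p q u v : ℕ} (h1 : p = u) (h2 : q = v) : mono p q = mono u v := by
  rw [h1, h2]

/-- β_{ε(m)} = β + (−1)^m·8. -/
noncomputable def eps (m : ℕ) : P3 := X 1 + C ((-1)^m * 8)

lemma eps_mono (m : ℕ) : eps m = mono (m % 2) (1 - m % 2) := by
  rcases Nat.even_or_odd m with h | h
  · have h2 : m % 2 = 0 := Nat.even_iff.1 h
    have : ((-1 : ℂ))^m = 1 := Even.neg_one_pow h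
    rw [eps, this, h2, mono, betaP]
    norm_num
  · have h2 : m % 2 = 1 := Nat.odd_iff.1 h
    have : ((-1 : ℂ))^m = -1 := Odd.neg_one_pow h
    rw [eps, this, h2, mono, betaM]
    have h8 : ((-1 : ℂ)) * 8 = -8 := by norm_num
    rw [h8, show ((-8 : ℂ)) = -(8:ℂ) by norm_num, map_neg]
    ring

/-- Multiplier Ψ at deficit `D` (β₋-exponent boosted for odd deficit). -/
noncomputable def psiZ (D : ℕ) : P3 := mono (D - 1 + D % 2) (D - 1)

/-- Multiplier Ψ' at deficit `D` (for the α-statements). -/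
noncomputable def psiZ' (D : ℕ) : P3 := mono (D - 1) (D - 1)

/-- Position factor β₋^{⌊k/2⌋} β₊^{⌈k/2⌉}. -/
noncomputable def Qp (k : ℕ) : P3 := mono (k / 2) ((k + 1) / 2)

/-- Multiplier selector. -/
noncomputable def psiE : ℕ → ℕ → P3
  | 0, D => psiZ D
  | (_ + 1), D => psiZ' D

/-- The recurrence, in clean form. -/
lemma zeta_rec (a : ℕ) : zeta (a+3) = X 0 * zeta (a + 2)
    + C (((a : ℂ) + 2) ^ 2) * eps a * zeta (a + 1)
    + C (2 * ((a : ℂ) + 2) * ((a : ℂ) + 1)) * X 2 * zeta a := by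
  rw [zeta]
  have : ((-1:ℂ))^(a+2) = (-1)^a := by rw [pow_add]; norm_num
  rw [eps, this]

lemma zeta_two : zeta 2 = X 0 * zeta 1 + betaM * zeta 0 := by
  rw [betaM]; rfl

/-! ### Membership helpers -/

lemma scaled_mem {I : Ideal P3} {c : ℂ} (hc : c ≠ 0) {a : P3}
    (h : C c * a ∈ I) : a ∈ I := by
  have h2 : a = C c⁻¹ * (C c * a) := by
    rw [← mul_assoc, ← C_mul, inv_mul_cancel₀ hc, C_1, one_mul]
  rw [h2]; exact I.mul_mem_left _ h

lemma mem_of_combo {I : Ideal P3} {c : ℂ} (hc : c ≠ 0) {a b₁ b₂ b₃ : P3}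
    (c₁ c₂ c₃ : P3) (h₁ : b₁ ∈ I) (h₂ : b₂ ∈ I) (h₃ : b₃ ∈ I)
    (h : C c * a = c₁ * b₁ + c₂ * b₂ + c₃ * b₃) : a ∈ I := by
  apply scaled_mem hc
  rw [h]
  exact add_mem (add_mem (I.mul_mem_left _ h₁) (I.mul_mem_left _ h₂)) (I.mul_mem_left _ h₃)

lemma mem_of_combo2 {I : Ideal P3} {a b₁ b₂ : P3}
    (c₁ c₂ : P3) (h₁ : b₁ ∈ I) (h₂ : b₂ ∈ I)
    (h : a = c₁ * b₁ + c₂ * b₂) : a ∈ I := by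
  rw [h]; exact add_mem (I.mul_mem_left _ h₁) (I.mul_mem_left _ h₂)

lemma upg {I : Ideal P3} {x : P3} (c : P3) (h : x ∈ I) {y : P3} (he : y = c * x) : y ∈ I :=
  he ▸ I.mul_mem_left c h

lemma cast_add_ne (a b : ℕ) (hb : 0 < b) : (a : ℂ) + (b : ℕ) ≠ 0 := by
  have : ((a : ℂ)) + (b : ℕ) = ((a + b : ℕ) : ℂ) := by push_cast; ring
  rw [this]
  exact Nat.cast_ne_zero.mpr (by omega)

lemma cast2_ne (a : ℕ) : ((a : ℂ) + 2) ^ 2 ≠ 0 := by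
  apply pow_ne_zero
  have := cast_add_ne a 2 (by norm_num)
  simpa using this

lemma castg_ne (a : ℕ) : 2 * ((a : ℂ) + 2) * ((a : ℂ) + 1) ≠ 0 := by
  have h1 := cast_add_ne a 2 (by norm_num)
  have h2 := cast_add_ne a 1 (by norm_num)
  simp only [Nat.cast_ofNat, Nat.cast_one] at h1 h2
  exact mul_ne_zero (mul_ne_zero two_ne_zero h1) h2

/-! ### ζ_k ∈ J_r for k ≥ r, and γ^t ζ_k ∈ J_r for t ≥ r − k -/

lemma zeta_mem (r : ℕ) : ∀ k, r ≤ k → zeta k ∈ J r := by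
  intro k
  induction k using Nat.strong_induction_on with
  | _ k IH =>
    intro h
    rcases lt_or_ge k (r+3) with h' | h'
    · have hk : k = r ∨ k = r+1 ∨ k = r+2 := by omega
      rcases hk with rfl | rfl | rfl <;>
        · apply Ideal.subset_span; simp [J]
    · obtain ⟨a, rfl⟩ : ∃ a, k = a+3 := ⟨k-3, by omega⟩
      rw [zeta_rec]
      exact add_mem (add_mem
        (Ideal.mul_mem_left _ _ (IH (a+2) (by omega) (by omega)))
        (Ideal.mul_mem_left _ _ (IH (a+1) (by omega) (by omega))))
        (Ideal.mul_mem_left _ _ (IH a (by omega) (by omega)))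

lemma L0 (r : ℕ) : ∀ d k t, d = r - k → r ≤ k + t → (X 2 : P3)^t * zeta k ∈ J r := by
  intro d
  induction d using Nat.strong_induction_on with
  | _ d IH =>
    intro k t hd h
    by_cases hk : r ≤ k
    · exact Ideal.mul_mem_left _ _ (zeta_mem r k hk)
    · push_neg at hk
      obtain ⟨t', rfl⟩ : ∃ t', t = t'+1 := ⟨t-1, by omega⟩
      have h1 : (X 2 : P3)^t' * zeta (k+3) ∈ J r :=
        IH (r - (k+3)) (by omega) (k+3) t' rfl (by omega)
      have h2 : (X 2 : P3)^t' * zeta (k+2) ∈ J r :=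
        IH (r - (k+2)) (by omega) (k+2) t' rfl (by omega)
      have h3 : (X 2 : P3)^t' * zeta (k+1) ∈ J r :=
        IH (r - (k+1)) (by omega) (k+1) t' rfl (by omega)
      apply mem_of_combo (castg_ne k) 1 (-X 0) (-(C (((k:ℂ)+2)^2) * eps k)) h1 h2 h3
      rw [zeta_rec k]
      ring

/-! ### monomial bookkeeping lemmas -/

lemma PL1 (a : ℕ) : Qp (a+1) = Qp a * eps a := by
  rw [Qp, Qp, eps_mono, mono_mul]
  exact mono_congr (by omega) (by omega)

lemma PL3 (m a : ℕ) : eps (a+1) * (psiZ (m+1) * Qp (a+3)) = psiZ (m+3) * Qp a := by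
  rw [eps_mono, psiZ, psiZ, Qp, Qp, mono_mul, mono_mul, mono_mul]
  exact mono_congr (by omega) (by omega)

lemma PL3' (m a : ℕ) : eps (a+1) * (psiZ' (m+1) * Qp (a+3)) = psiZ' (m+3) * Qp a := by
  rw [eps_mono, psiZ', psiZ', Qp, Qp, mono_mul, mono_mul, mono_mul]
  exact mono_congr (by omega) (by omega)

lemma PL4 (m a : ℕ) :
    betaM^((m+2)%2) * (psiZ' (m+1) * Qp (a+2)) = psiZ (m+2) * Qp a := by
  rw [show (betaM^((m+2)%2) : P3) = mono ((m+2)%2) 0 from by rw [mono, pow_zero, mul_one],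
    psiZ', psiZ, Qp, Qp, mono_mul, mono_mul, mono_mul]
  exact mono_congr (by omega) (by omega)

lemma PL5 (m a : ℕ) : psiZ' (m+1) * Qp (a+2) = psiZ' (m+2) * Qp a := by
  rw [psiZ', psiZ', Qp, Qp, mono_mul, mono_mul]
  exact mono_congr (by omega) (by omega)

lemma PL6 (d : ℕ) : betaM * mono (d+(d+1)%2-1) d = psiZ (d+1) := by
  rw [show (betaM : P3) = mono 1 0 from by rw [mono, pow_one, pow_zero, mul_one],
    psiZ, mono_mul]
  exact mono_congr (by omega) (by omega)

lemma PL7 (m : ℕ) : betaP * (psiZ (m+1) * Qp 2) = mono ((m+2)+(m+3)%2-1) (m+2) := by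
  rw [show (betaP : P3) = mono 0 1 from by rw [mono, pow_one, pow_zero, one_mul],
    psiZ, Qp, mono_mul, mono_mul]
  exact mono_congr (by omega) (by omega)

lemma PL8 (m : ℕ) : betaM^((m+2)%2) * (psiZ' (m+1) * Qp 1) = mono ((m+1)+(m+2)%2-1) (m+1) := by
  rw [show (betaM^((m+2)%2) : P3) = mono ((m+2)%2) 0 from by rw [mono, pow_zero, mul_one],
    psiZ', Qp, mono_mul, mono_mul]
  exact mono_congr (by omega) (by omega)

lemma PL9 (c e : ℕ) : betaM * (psiE e (2*c+2) * Qp 1) = psiZ' (2*c+3) := by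
  have hz : psiE e (2*c+2) = mono (2*c+1) (2*c+1) := by
    rcases e with _ | e'
    · rw [psiE, psiZ]
      exact mono_congr (by omega) (by omega)
    · rw [psiE, psiZ']
      exact mono_congr (by omega) (by omega)
  rw [hz, show (betaM : P3) = mono 1 0 from by rw [mono, pow_one, pow_zero, mul_one],
    psiZ', Qp, mono_mul, mono_mul]
  exact mono_congr (by omega) (by omega)

lemma PL11 (m k : ℕ) : rho (m+1) * phi k = psiZ (m+1) * Qp k := by
  have h1 : rho (m+1) = mono (2*(m/2)) m := by rw [rho, mono]
  have h2 : phi k = mono (k/2+1) ((k+1)/2) := by rw [phi, mono]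
  rw [h1, h2, psiZ, Qp, mono_mul, mono_mul]
  exact mono_congr (by omega) (by omega)

lemma PL12 {D : ℕ} (h : D % 2 = 0) : psiZ D = psiZ' D := by
  rw [psiZ, psiZ']
  exact mono_congr (by omega) rfl

end RhoPhiAux

open RhoPhiAux
namespace RhoPhiAux

lemma Qp0 : Qp 0 = 1 := by rw [Qp, mono]; norm_num

lemma psiZ'1 : psiZ' 1 = 1 := by rw [psiZ', mono]; norm_num

lemma Main (r : ℕ) : ∀ D k t e, r = k + t + D →
    (if D = 0 then 1 else psiE e D * Qp k) * (X 0^e * (X 2^t * zeta k)) ∈ J r := by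
  intro D
  induction D using Nat.strong_induction_on with
  | _ D IHD =>
  intro k
  induction k using Nat.strong_induction_on with
  | _ k IHK =>
  intro t e
  induction e using Nat.strong_induction_on generalizing t with
  | _ e IHE =>
  intro hr
  rcases D with _ | d
  · -- deficit 0 : base case
    rw [if_pos rfl, one_mul]
    exact Ideal.mul_mem_left _ _ (L0 r (r-k) k t rfl (by omega))
  rw [if_neg (show ¬(d+1 = 0) by omega)]
  rcases e with _ | e'
  · -- e = 0 : the plain statement
    rw [show psiE 0 (d+1) = psiZ (d+1) from rfl]
    rcases k with _ | a
    · -- k = 0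
      have hz2 := zeta_two
      rcases d with _ | d₁
      · -- D = 1
        have h₁ : mono (0+(0+1)%2-1) 0 * ((X 0:P3)^0*(X 2^t * zeta 2)) ∈ J r := by
          refine upg (mono (0+(0+1)%2-1) 0 * (X 0:P3)^0) (L0 r (r-2) 2 t rfl (by omega)) ?_
          ring
        have h₂ : mono (0+(0+1)%2-1) 0 * ((X 0:P3)^1*(X 2^t * zeta 1)) ∈ J r := by
          refine upg (mono (0+(0+1)%2-1) 0 * (X 0:P3)^1) (L0 r (r-1) 1 t rfl (by omega)) ?_
          ring
        apply mem_of_combo2 1 (-1) h₁ h₂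
        rw [← PL6 0, hz2, Qp0]
        ring
      rcases d₁ with _ | m
      · -- D = 2
        have h₁ : mono (1+(1+1)%2-1) 1 * ((X 0:P3)^0*(X 2^t * zeta 2)) ∈ J r := by
          refine upg (mono (1+(1+1)%2-1) 1 * (X 0:P3)^0) (L0 r (r-2) 2 t rfl (by omega)) ?_
          ring
        have h₂ : mono (1+(1+1)%2-1) 1 * ((X 0:P3)^1*(X 2^t * zeta 1)) ∈ J r := by
          have raw := IHD 1 (by omega) 1 t 1 (by omega)
          rw [if_neg (show ¬(1 = 0) by omega),
            show psiE 1 1 = psiZ' 1 from rfl] at raw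
          refine upg (betaM^((0+2)%2)) raw ?_
          rw [← PL8 0]
          ring
        apply mem_of_combo2 1 (-1) h₁ h₂
        rw [← PL6 1, hz2, Qp0]
        ring
      · -- D = m+3
        rw [show m+2+1 = m+3 by omega]
        have h₁ : mono (m+2+(m+3)%2-1) (m+2) * ((X 0:P3)^0*(X 2^t * zeta 2)) ∈ J r := by
          have raw := IHD (m+1) (by omega) 2 t 0 (by omega)
          rw [if_neg (show ¬(m+1 = 0) by omega),
            show psiE 0 (m+1) = psiZ (m+1) from rfl] at raw
          refine upg betaP raw ?_
          rw [← PL7 m]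
          ring
        have h₂ : mono (m+2+(m+3)%2-1) (m+2) * ((X 0:P3)^1*(X 2^t * zeta 1)) ∈ J r := by
          have raw := IHD (m+2) (by omega) 1 t 1 (by omega)
          rw [if_neg (show ¬(m+2 = 0) by omega),
            show psiE 1 (m+2) = psiZ' (m+2) from rfl] at raw
          have key := PL8 (m+1)
          rw [show m+1+1 = m+2 by omega, show m+1+2 = m+3 by omega] at key
          refine upg (betaM^((m+3)%2)) raw ?_
          rw [← key]
          ring
        have key6 := PL6 (m+2)
        rw [show m+2+1 = m+3 by omega] at key6
        apply mem_of_combo2 1 (-1) h₁ h₂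
        rw [← key6, hz2, Qp0]
        ring
    · -- k = a+1
      have h₃ : (psiZ (d+1) * Qp a) * ((X 0:P3)^0*(X 2^(t+1) * zeta a)) ∈ J r := by
        have raw := IHK a (by omega) (t+1) 0 (by omega)
        rwa [if_neg (show ¬(d+1 = 0) by omega),
          show psiE 0 (d+1) = psiZ (d+1) from rfl] at raw
      have h₁ : (psiZ (d+1) * Qp a) * ((X 0:P3)^0*(X 2^t * zeta (a+3))) ∈ J r := by
        rcases d with _ | d₁
        · refine upg ((psiZ 1 * Qp a) * (X 0:P3)^0) (L0 r (r-(a+3)) (a+3) t rfl (by omega)) ?_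
          ring
        rcases d₁ with _ | m
        · refine upg ((psiZ 2 * Qp a) * (X 0:P3)^0) (L0 r (r-(a+3)) (a+3) t rfl (by omega)) ?_
          ring
        · rw [show m+2+1 = m+3 by omega]
          have raw := IHD (m+1) (by omega) (a+3) t 0 (by omega)
          rw [if_neg (show ¬(m+1 = 0) by omega),
            show psiE 0 (m+1) = psiZ (m+1) from rfl] at raw
          refine upg (eps (a+1)) raw ?_
          rw [← PL3 m a]
          ring
      have h₂ : (psiZ (d+1) * Qp a) * ((X 0:P3)^1*(X 2^t * zeta (a+2))) ∈ J r := by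
        rcases d with _ | m
        · refine upg ((psiZ 1 * Qp a) * (X 0:P3)^1) (L0 r (r-(a+2)) (a+2) t rfl (by omega)) ?_
          ring
        · rw [show m+1+1 = m+2 by omega]
          have raw := IHD (m+1) (by omega) (a+2) t 1 (by omega)
          rw [if_neg (show ¬(m+1 = 0) by omega),
            show psiE 1 (m+1) = psiZ' (m+1) from rfl] at raw
          refine upg (betaM^((m+2)%2)) raw ?_
          rw [← PL4 m a]
          ring
      apply mem_of_combo (cast2_ne a) 1 (-1) (-(C (2*((a:ℂ)+2)*((a:ℂ)+1)))) h₁ h₂ h₃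
      rw [PL1 a, zeta_rec a]
      ring
  · -- e = e'+1 : the α-statements
    rw [show psiE (e'+1) (d+1) = psiZ' (d+1) from rfl]
    by_cases hpar : (d+1) % 2 = 0
    · -- deficit even : multiply the plain statement by α^{e'+1}
      have raw := IHE 0 (by omega) t hr
      rw [if_neg (show ¬(d+1 = 0) by omega),
        show psiE 0 (d+1) = psiZ (d+1) from rfl] at raw
      refine upg ((X 0:P3)^(e'+1)) raw ?_
      rw [← PL12 hpar]
      ring
    · -- deficit odd
      have hd2 : d % 2 = 0 := by omega
      obtain ⟨c, rfl⟩ : ∃ c, d = 2*c := ⟨d/2, by omega⟩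
      rcases k with _ | a
      · -- k = 0 : use αζ_0 = ζ_1
        rcases c with _ | c'
        · -- D = 1
          have raw := IHD 0 (by omega) 1 t e' (by omega)
          rw [if_pos rfl] at raw
          refine upg 1 raw ?_
          rw [show zeta 1 = X 0 from rfl, show zeta 0 = 1 from rfl,
            show (2*0+1) = 1 by omega, psiZ'1, Qp0]
          ring
        · -- D = 2c'+3
          rw [show 2*(c'+1)+1 = 2*c'+3 by omega]
          have raw := IHD (2*c'+2) (by omega) 1 t e' (by omega)
          rw [if_neg (show ¬(2*c'+2 = 0) by omega)] at raw
          refine upg betaM raw ?_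
          rw [← PL9 c' e', Qp0, show zeta 1 = X 0 from rfl, show zeta 0 = 1 from rfl]
          ring
      · -- k = a+1
        have h₃ : (psiZ' (2*c+1) * Qp a) * ((X 0:P3)^(e'+1)*(X 2^(t+1) * zeta a)) ∈ J r := by
          have raw := IHK a (by omega) (t+1) (e'+1) (by omega)
          rwa [if_neg (show ¬(2*c+1 = 0) by omega),
            show psiE (e'+1) (2*c+1) = psiZ' (2*c+1) from rfl] at raw
        have h₁ : (psiZ' (2*c+1) * Qp a) * ((X 0:P3)^(e'+1)*(X 2^t * zeta (a+3))) ∈ J r := by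
          rcases c with _ | c'
          · refine upg ((psiZ' (2*0+1) * Qp a) * (X 0:P3)^(e'+1))
              (L0 r (r-(a+3)) (a+3) t rfl (by omega)) ?_
            ring
          · rw [show 2*(c'+1)+1 = 2*c'+3 by omega]
            have raw := IHD (2*c'+1) (by omega) (a+3) t (e'+1) (by omega)
            rw [if_neg (show ¬(2*c'+1 = 0) by omega),
              show psiE (e'+1) (2*c'+1) = psiZ' (2*c'+1) from rfl] at raw
            refine upg (eps (a+1)) raw ?_
            rw [← PL3' (2*c') a, show 2*c'+1 = 2*c'+0+1 by omega]
            ring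
        have h₂ : (psiZ' (2*c+1) * Qp a) * ((X 0:P3)^(e'+1+1)*(X 2^t * zeta (a+2))) ∈ J r := by
          rcases c with _ | c'
          · refine upg ((psiZ' (2*0+1) * Qp a) * (X 0:P3)^(e'+1+1))
              (L0 r (r-(a+2)) (a+2) t rfl (by omega)) ?_
            ring
          · rw [show 2*(c'+1)+1 = 2*c'+3 by omega]
            have raw := IHD (2*c'+2) (by omega) (a+2) t (e'+2) (by omega)
            rw [if_neg (show ¬(2*c'+2 = 0) by omega),
              show psiE (e'+2) (2*c'+2) = psiZ' (2*c'+2) from rfl] at raw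
            have key := PL5 (2*c'+1) a
            rw [show 2*c'+1+2 = 2*c'+3 by omega, show 2*c'+1+1 = 2*c'+2 by omega] at key
            refine upg 1 raw ?_
            rw [one_mul, show e'+1+1 = e'+2 by omega, ← key]
        apply mem_of_combo (cast2_ne a) 1 (-1) (-(C (2*((a:ℂ)+2)*((a:ℂ)+1)))) h₁ h₂ h₃
        rw [PL1 a, zeta_rec a]
        ring

end RhoPhiAux

open RhoPhiAux in
/-- For all r ≥ 1 and 0 ≤ j ≤ r, ρ_j φ_{r−j} ζ_{r−j} ∈ J_r. -/
theorem rho_phi_zeta_mem (r j : ℕ) (hr : 1 ≤ r) (hj : j ≤ r) :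
    rho j * phi (r - j) * zeta (r - j) ∈ J r := by
  rcases j with _ | m
  · simp only [Nat.sub_zero]
    exact Ideal.mul_mem_left _ _ (zeta_mem r r le_rfl)
  · have H := Main r (m+1) (r-(m+1)) 0 0 (by omega)
    rw [if_neg (show ¬(m+1 = 0) by omega),
      show psiE 0 (m+1) = psiZ (m+1) from rfl, pow_zero, pow_zero, one_mul, one_mul] at H
    refine upg 1 H ?_
    rw [one_mul, PL11 m (r-(m+1))]
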